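/- arXiv:2105.09019 — 5 statements merged into one kernel-verified Lean document; each statement's English description precedes it below -/
import Mathlib

section
/- For every t ∈ ℝ, the complex-valued integral ∫_{−∞}^{∞} (it + 1 − e^{x}) e^{itx} e^{x − e^{x}} dx equals 0; that is, if W follows the standard type I extreme value distribution EV(0,1), then E[(it + 1 − e^W) e^{itW}] = 0 for all t ∈ ℝ. -/
open MeasureTheory

lemma aux_exp_quartic (x : ℝ) (hx : 0 < x) : (1 + x/4)^4 ≤ Real.exp x := by
  have h := Real.add_one_le_exp (x/4)
  have h0 : (0:ℝ) ≤ x/4 + 1 := by linarith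
  have h4 : (x/4 + 1)^4 ≤ (Real.exp (x/4))^4 := pow_le_pow_left₀ h0 h 4
  have he : (Real.exp (x/4))^4 = Real.exp x := by
    rw [← Real.exp_nat_mul]; norm_num; ring_nf
  rw [he] at h4
  calc (1 + x/4)^4 = (x/4 + 1)^4 := by ring_nf
    _ ≤ Real.exp x := h4

lemma aux_sub_le_neg_abs (x : ℝ) : x - Real.exp x ≤ -|x| := by
  rcases le_or_gt x 0 with h | h
  · rw [abs_of_nonpos h]
    have := Real.exp_pos x
    linarith
  · rw [abs_of_pos h]
    -- need 2x ≤ exp x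
    have h2 := aux_exp_quartic x h
    nlinarith [sq_nonneg (x/2 - 1), sq_nonneg x, sq_nonneg (x^2 + 8*x - 16), sq_nonneg (x - 2)]

lemma aux_two_sub_le (x : ℝ) : 2*x - Real.exp x ≤ 1 - |x| := by
  rcases le_or_gt x 0 with h | h
  · rw [abs_of_nonpos h]
    have := Real.exp_pos x
    linarith
  · rw [abs_of_pos h]
    have h2 := aux_exp_quartic x h
    nlinarith [sq_nonneg (x^2 + 8*x - 16), sq_nonneg (x - 2)]

lemma integrable_exp_neg_abs : Integrable (fun x : ℝ => Real.exp (-|x|)) := by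
  rw [← integrableOn_univ, ← Set.Iic_union_Ioi (a := (0:ℝ))]
  apply IntegrableOn.union
  · exact (integrableOn_exp_Iic 0).congr_fun
      (fun x hx => by rw [abs_of_nonpos hx, neg_neg]) measurableSet_Iic
  · exact ((exp_neg_integrableOn_Ioi 0 one_pos).congr_fun
      (fun x hx => by rw [abs_of_pos hx]; ring_nf) measurableSet_Ioi)

/-- If `W ~ EV(0,1)` (density `e^{x - e^x}`), then `E[(it + 1 - e^W) e^{itW}] = 0`
for every real `t`. -/
theorem stmt_1 :
    ∀ t : ℝ,
      ∫ x : ℝ, ((t : ℂ) * Complex.I + 1 - (Real.exp x : ℂ)) *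
        Complex.exp ((t : ℂ) * Complex.I * (x : ℂ)) *
        (Real.exp (x - Real.exp x) : ℂ) = 0 := by
  intro t
  set f : ℝ → ℂ := fun x => Complex.exp ((t : ℂ) * Complex.I * (x : ℂ) + (x : ℂ) - (Real.exp x : ℂ))
  set f' : ℝ → ℂ := fun x => ((t : ℂ) * Complex.I + 1 - (Real.exp x : ℂ)) *
        Complex.exp ((t : ℂ) * Complex.I * (x : ℂ)) * (Real.exp (x - Real.exp x) : ℂ)
  have hfeq : ∀ x : ℝ, f x = Complex.exp ((t : ℂ) * Complex.I * (x : ℂ)) *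
      (Real.exp (x - Real.exp x) : ℂ) := by
    intro x
    simp only [f]
    rw [show ((t : ℂ) * Complex.I * (x : ℂ) + (x : ℂ) - (Real.exp x : ℂ))
        = (t : ℂ) * Complex.I * (x : ℂ) + ((x : ℝ) - Real.exp x : ℝ) by push_cast; ring,
      Complex.exp_add, Complex.ofReal_exp]
  have hderiv : ∀ x : ℝ, HasDerivAt f (f' x) x := by
    intro x
    have h1 : HasDerivAt (fun y : ℝ => (y : ℂ)) 1 x := by
      simpa using (hasDerivAt_id x).ofReal_comp
    have h2 : HasDerivAt (fun y : ℝ => (Real.exp y : ℂ)) (Real.exp x : ℂ) x :=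
      (Real.hasDerivAt_exp x).ofReal_comp
    have h3 : HasDerivAt (fun y : ℝ => (t : ℂ) * Complex.I * (y : ℂ) + (y : ℂ) - (Real.exp y : ℂ))
        ((t : ℂ) * Complex.I * 1 + 1 - (Real.exp x : ℂ)) x :=
      ((h1.const_mul ((t : ℂ) * Complex.I)).add h1).sub h2
    have := h3.cexp
    simp only [mul_one] at this
    convert this using 1
    show f' x = f x * _
    rw [hfeq x]
    simp only [f']
    ring
  have hnorm : ∀ x : ℝ, ‖f x‖ = Real.exp (x - Real.exp x) := by
    intro x
    rw [hfeq x, norm_mul, Complex.norm_exp, Complex.norm_real,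
      Real.norm_eq_abs, abs_of_nonneg (Real.exp_nonneg _)]
    simp
  have hzero : ∀ x : ℝ, ‖f x‖ ≤ Real.exp (-|x|) := by
    intro x
    rw [hnorm x]
    exact Real.exp_le_exp.2 (aux_sub_le_neg_abs x)
  have htendsto_top : Filter.Tendsto f Filter.atTop (nhds 0) := by
    rw [tendsto_zero_iff_norm_tendsto_zero]
    apply squeeze_zero (fun x => norm_nonneg _) hzero
    apply Real.tendsto_exp_atBot.comp
    exact Filter.tendsto_neg_atBot_iff.mpr Filter.tendsto_abs_atTop_atTop
  have htendsto_bot : Filter.Tendsto f Filter.atBot (nhds 0) := by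
    rw [tendsto_zero_iff_norm_tendsto_zero]
    apply squeeze_zero (fun x => norm_nonneg _) hzero
    apply Real.tendsto_exp_atBot.comp
    exact Filter.tendsto_neg_atBot_iff.mpr Filter.tendsto_abs_atBot_atTop
  have hbound : ∀ x : ℝ, ‖f' x‖ ≤ (|t| + 1 + Real.exp 1) * Real.exp (-|x|) := by
    intro x
    simp only [f']
    rw [norm_mul, norm_mul]
    have e1 : ‖((t : ℂ) * Complex.I + 1 - (Real.exp x : ℂ))‖ ≤ |t| + 1 + Real.exp x := by
      calc ‖((t : ℂ) * Complex.I + 1 - (Real.exp x : ℂ))‖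
          ≤ ‖(t : ℂ) * Complex.I + 1‖ + ‖(Real.exp x : ℂ)‖ := norm_sub_le _ _
        _ ≤ ‖(t : ℂ) * Complex.I‖ + ‖(1 : ℂ)‖ + ‖(Real.exp x : ℂ)‖ := by
            gcongr; exact norm_add_le _ _
        _ = |t| + 1 + Real.exp x := by
            simp [abs_of_nonneg (Real.exp_nonneg x)]
    have e2 : ‖Complex.exp ((t : ℂ) * Complex.I * (x : ℂ))‖ = 1 := by
      rw [Complex.norm_exp]
      simp
    have e3 : ‖(Real.exp (x - Real.exp x) : ℂ)‖ = Real.exp (x - Real.exp x) := by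
      rw [Complex.norm_real, Real.norm_eq_abs, abs_of_nonneg (Real.exp_nonneg _)]
    rw [e2, e3, mul_one]
    have key1 : Real.exp (x - Real.exp x) ≤ Real.exp (-|x|) :=
      Real.exp_le_exp.2 (aux_sub_le_neg_abs x)
    have key2 : Real.exp x * Real.exp (x - Real.exp x) ≤ Real.exp 1 * Real.exp (-|x|) := by
      rw [← Real.exp_add, ← Real.exp_add]
      exact Real.exp_le_exp.2 (by have := aux_two_sub_le x; linarith)
    calc ‖((t : ℂ) * Complex.I + 1 - (Real.exp x : ℂ))‖ * Real.exp (x - Real.exp x)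
        ≤ (|t| + 1 + Real.exp x) * Real.exp (x - Real.exp x) := by
          apply mul_le_mul_of_nonneg_right e1 (Real.exp_nonneg _)
      _ = (|t| + 1) * Real.exp (x - Real.exp x) + Real.exp x * Real.exp (x - Real.exp x) := by
          ring
      _ ≤ (|t| + 1) * Real.exp (-|x|) + Real.exp 1 * Real.exp (-|x|) := by
          exact add_le_add (mul_le_mul_of_nonneg_left key1 (by positivity)) key2
      _ = (|t| + 1 + Real.exp 1) * Real.exp (-|x|) := by ring
  have hcont : Continuous f' := by
    simp only [f']
    continuity
  have hint : Integrable f' := by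
    apply Integrable.mono' (integrable_exp_neg_abs.const_mul (|t| + 1 + Real.exp 1))
      hcont.aestronglyMeasurable
    exact Filter.Eventually.of_forall hbound
  have := integral_of_hasDerivAt_of_tendsto hderiv hint htendsto_bot htendsto_top
  simpa using this
end

section
/- Let f : ℝ → ℂ be differentiable with both f and its derivative f′ bounded on ℝ. Then ∫_{−∞}^{∞} f′(x) e^{x − e^{x}} dx = ∫_{−∞}^{∞} (e^{x} − 1) f(x) e^{x − e^{x}} dx; that is, if W follows the standard type I extreme value distribution EV(0,1), then E[f′(W)] = E[(e^W − 1) f(W)] (the Stein identity for the EV(0,1) distribution). -/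
open MeasureTheory

lemma int_exp_aux {c : ℝ} (hc : 1 ≤ c) :
    Integrable (fun x : ℝ => Real.exp (c * x - Real.exp x)) := by
  rw [← integrableOn_univ, ← Set.Iic_union_Ioi (a := (0:ℝ))]
  apply IntegrableOn.union
  · refine (integrableOn_exp_Iic 0).mono' ?_ ?_
    · exact (Real.continuous_exp.comp (by fun_prop)).aestronglyMeasurable
    · filter_upwards [ae_restrict_mem measurableSet_Iic] with x hx
      simp only [Set.mem_Iic] at hx
      rw [Real.norm_eq_abs, abs_of_pos (Real.exp_pos _)]
      apply Real.exp_le_exp.2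
      nlinarith [Real.exp_pos x, Real.add_one_le_exp x]
  · refine ((exp_neg_integrableOn_Ioi 0 (one_pos)).const_mul (Real.exp ((c+1)^2))).mono' ?_ ?_
    · exact (Real.continuous_exp.comp (by fun_prop)).aestronglyMeasurable
    · filter_upwards [ae_restrict_mem measurableSet_Ioi] with x hx
      simp only [Set.mem_Ioi] at hx
      rw [Real.norm_eq_abs, abs_of_pos (Real.exp_pos _), ← Real.exp_add]
      apply Real.exp_le_exp.2
      have h1 : Real.exp (x/2) * Real.exp (x/2) = Real.exp x := by
        rw [← Real.exp_add]; ring_nf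
      have h2 := Real.add_one_le_exp (x/2)
      have h3 : (x/2+1)^2 ≤ Real.exp x := by nlinarith
      nlinarith [h3, sq_nonneg (c + 1 - x/2), hx.le]

/-- Stein identity for the EV(0,1) distribution: for differentiable `f : ℝ → ℂ` with
`f` and `f'` bounded, `E[f'(W)] = E[(e^W - 1) f(W)]` when `W` has density `e^{x - e^x}`. -/
theorem stmt_3
    (f : ℝ → ℂ) (hf : Differentiable ℝ f)
    (hfb : ∃ C : ℝ, ∀ x : ℝ, ‖f x‖ ≤ C)
    (hf'b : ∃ C : ℝ, ∀ x : ℝ, ‖deriv f x‖ ≤ C) :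
    ∫ x : ℝ, deriv f x * (Real.exp (x - Real.exp x) : ℂ) =
      ∫ x : ℝ, ((Real.exp x : ℂ) - 1) * f x * (Real.exp (x - Real.exp x) : ℂ) := by
  set g : ℝ → ℂ := fun x => (Real.exp (x - Real.exp x) : ℂ) with hg_def
  set g' : ℝ → ℂ := fun x => (1 - (Real.exp x : ℂ)) * (Real.exp (x - Real.exp x) : ℂ) with hg'_def
  have hgR : ∀ x : ℝ, HasDerivAt (fun x => Real.exp (x - Real.exp x))
      (Real.exp (x - Real.exp x) * (1 - Real.exp x)) x := by
    intro x
    have h1 : HasDerivAt (fun x : ℝ => x - Real.exp x) (1 - Real.exp x) x :=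
      (hasDerivAt_id x).sub (Real.hasDerivAt_exp x)
    exact h1.exp
  have hg : ∀ x : ℝ, HasDerivAt g (g' x) x := by
    intro x
    have := (hgR x).ofReal_comp
    simpa [g, g', mul_comm] using this
  have hu : ∀ x : ℝ, HasDerivAt f (deriv f x) x := fun x => (hf x).hasDerivAt
  -- integrability of g and e^x * g
  have hmeasf : AEStronglyMeasurable f volume := hf.continuous.aestronglyMeasurable
  have hmeasf' : AEStronglyMeasurable (deriv f) volume :=
    (measurable_deriv f).aestronglyMeasurable
  have hgI : Integrable g := by
    have := (int_exp_aux (le_refl 1)).ofReal (𝕜 := ℂ)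
    simpa [g, one_mul] using this
  have hg2I : Integrable (fun x : ℝ => ((Real.exp (2*x - Real.exp x) : ℝ) : ℂ)) :=
    (int_exp_aux (by norm_num : (1:ℝ) ≤ 2)).ofReal (𝕜 := ℂ)
  have hg'I : Integrable g' := by
    have heq : g' = fun x : ℝ => g x - ((Real.exp (2*x - Real.exp x) : ℝ) : ℂ) := by
      funext x
      simp only [g', g, sub_mul, one_mul]
      congr 1
      rw [← Complex.ofReal_mul, ← Real.exp_add]
      ring_nf
    rw [heq]
    exact hgI.sub hg2I
  have huv' : Integrable (f * g') := hg'I.bdd_mul hmeasf (ae_of_all _ hfb.choose_spec)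
  have hu'v : Integrable (deriv f * g) := hgI.bdd_mul hmeasf' (ae_of_all _ hf'b.choose_spec)
  have huv : Integrable (f * g) := hgI.bdd_mul hmeasf (ae_of_all _ hfb.choose_spec)
  have key := integral_mul_deriv_eq_deriv_mul_of_integrable (fun x _ => hu x) (fun x _ => hg x) huv' hu'v huv
  -- key : ∫ x, f x * g' x = - ∫ x, deriv f x * g x
  have : ∫ x : ℝ, deriv f x * g x = ∫ x : ℝ, -(f x * g' x) := by
    rw [integral_neg, key, neg_neg]
  rw [this]
  congr 1
  funext x
  simp only [g', g]
  ring
end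

section
/- Let n ∈ ℕ, let y₁, …, yₙ ∈ ℝ and Δ₁, …, Δₙ ∈ ℝ, and let a > 0. Then n ∫_{−∞}^{∞} | Σ_{j=1}^{n} Δ_j (it e^{it y_j} + (1 − e^{y_j}) e^{it y_j}) |² e^{−a t²} dt = n √(π/a) Σ_{j=1}^{n} Σ_{k=1}^{n} Δ_j Δ_k e^{−(y_j − y_k)²/(4a)} { −(1/(4a²))((y_j − y_k)² − 2a) + 2(1 − e^{y_j})(1/(2a))(y_j − y_k) + (1 − e^{y_j})(1 − e^{y_k}) }, where |·| denotes the complex modulus and i = √(−1). -/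
open MeasureTheory Finset Complex Filter Topology

noncomputable def myg (a b : ℝ) (t : ℝ) : ℂ :=
  Complex.exp (Complex.I * b * t) * Complex.exp (-(a:ℂ) * t^2)

lemma myg_def (a b t : ℝ) :
    myg a b t = Complex.exp (Complex.I * b * t) * Complex.exp (-(a:ℂ) * t^2) := rfl

lemma myHasDerivAt_g (a b t : ℝ) :
    HasDerivAt (myg a b) ((Complex.I * b - 2*a*t) * myg a b t) t := by
  have h1 : HasDerivAt (fun t : ℝ => (t:ℂ)) 1 t := by
    simpa using (hasDerivAt_id t).ofReal_comp
  have h2 : HasDerivAt (fun t : ℝ => Complex.I * b * t) (Complex.I * b) t := by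
    simpa using h1.const_mul (Complex.I * (b:ℂ))
  have h3 := h2.cexp
  have h4 : HasDerivAt (fun t : ℝ => (t:ℂ)^2) (2*t) t := by
    have h := h1.mul h1
    have e : (fun t : ℝ => (t:ℂ) * (t:ℂ)) = fun t : ℝ => (t:ℂ)^2 := by
      funext t; ring
    simp only [Pi.mul_def] at h
    rw [e] at h
    exact h.congr_deriv (by ring)
  have h5 : HasDerivAt (fun t : ℝ => -(a:ℂ) * t^2) (-(a:ℂ) * (2*t)) t := h4.const_mul _
  have h6 := h5.cexp
  have h := h3.mul h6
  simp only [Pi.mul_def] at h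
  unfold myg
  exact h.congr_deriv (by ring)

lemma my_norm_eq (a b : ℝ) (k : ℕ) (t : ℝ) :
    ‖(t:ℂ)^k * myg a b t‖ = |t|^k * Real.exp (-a * t^2) := by
  rw [myg_def, norm_mul, norm_mul, norm_pow]
  simp only [Complex.norm_exp, Complex.norm_real, Real.norm_eq_abs]
  rw [show (Complex.I * (b:ℂ) * (t:ℂ)).re = 0 by simp [Complex.mul_re],
    show (-(a:ℂ) * (t:ℂ)^2).re = -a * t^2 by
      rw [show -(a:ℂ) * (t:ℂ)^2 = ((-a * t^2 : ℝ) : ℂ) by push_cast; ring, Complex.ofReal_re]]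
  simp

lemma my_integrable (a : ℝ) (ha : 0 < a) (b : ℝ) (k : ℕ) :
    Integrable (fun t : ℝ => (t:ℂ)^k * myg a b t) := by
  have hmeas : AEStronglyMeasurable (fun t : ℝ => (t:ℂ)^k * myg a b t) volume := by
    apply Continuous.aestronglyMeasurable
    unfold myg
    fun_prop
  have hint : Integrable fun x : ℝ => x ^ k * Real.exp (-a * x ^ 2) := by
    have h := integrable_rpow_mul_exp_neg_mul_sq ha (s := (k:ℝ))
      ((by norm_num : (-1:ℝ) < 0).trans_le (Nat.cast_nonneg k))
    simpa [Real.rpow_natCast] using h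
  refine hint.abs.mono' hmeas ?_
  filter_upwards with t
  rw [my_norm_eq, _root_.abs_mul, _root_.abs_pow, Real.abs_exp]

lemma my_tendsto_norm (a : ℝ) (ha : 0 < a) (k : ℕ) :
    Tendsto (fun t : ℝ => |t|^k * Real.exp (-a * t^2)) atTop (𝓝 0) := by
  have hlin : Tendsto (fun x : ℝ => -(1/2) * x) atTop atBot :=
    Tendsto.const_mul_atTop_of_neg (by norm_num) tendsto_id
  have h := (rpow_mul_exp_neg_mul_sq_isLittleO_exp_neg ha (k:ℝ)).trans_tendsto
    (Real.tendsto_exp_atBot.comp hlin)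
  apply h.congr'
  filter_upwards [eventually_ge_atTop (0:ℝ)] with t ht
  rw [Real.rpow_natCast, _root_.abs_of_nonneg ht]

lemma my_tendsto_top (a : ℝ) (ha : 0 < a) (b : ℝ) (k : ℕ) :
    Tendsto (fun t : ℝ => (t:ℂ)^k * myg a b t) atTop (𝓝 0) := by
  rw [tendsto_zero_iff_norm_tendsto_zero]
  simpa only [my_norm_eq] using my_tendsto_norm a ha k

lemma my_tendsto_bot (a : ℝ) (ha : 0 < a) (b : ℝ) (k : ℕ) :
    Tendsto (fun t : ℝ => (t:ℂ)^k * myg a b t) atBot (𝓝 0) := by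
  rw [tendsto_zero_iff_norm_tendsto_zero]
  simp only [my_norm_eq]
  have h := (my_tendsto_norm a ha k).comp tendsto_neg_atBot_atTop
  apply h.congr
  intro t
  simp [neg_sq]

lemma my_integral_deriv_eq_zero {f f' : ℝ → ℂ} (hd : ∀ x, HasDerivAt f (f' x) x)
    (hi : Integrable f') (h1 : Tendsto f atTop (𝓝 0)) (h2 : Tendsto f atBot (𝓝 0)) :
    ∫ x, f' x = 0 := by
  have A := integral_Iic_of_hasDerivAt_of_tendsto' (a := (0:ℝ)) (fun x _ => hd x)
    hi.integrableOn h2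
  have B := integral_Ioi_of_hasDerivAt_of_tendsto' (a := (0:ℝ)) (fun x _ => hd x)
    hi.integrableOn h1
  rw [← intervalIntegral.integral_Iic_add_Ioi (b := (0:ℝ)) hi.integrableOn hi.integrableOn, A, B]
  ring

lemma myI0 (a : ℝ) (ha : 0 < a) (b : ℝ) :
    ∫ t : ℝ, myg a b t = ((Real.sqrt (Real.pi/a) * Real.exp (-b^2/(4*a)) : ℝ) : ℂ) := by
  have h := fourierIntegral_gaussian (b := (a:ℂ)) (by simpa using ha) (b:ℂ)
  simp only [myg_def]
  rw [h, show ((Real.pi:ℂ))/(a:ℂ) = ((Real.pi/a : ℝ):ℂ) by push_cast; ring,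
    show (-(b:ℂ)^2/(4*(a:ℂ))) = ((-b^2/(4*a) : ℝ):ℂ) by push_cast; ring,
    ← Complex.ofReal_exp,
    show (1/2 : ℂ) = (((1/2 : ℝ) : ℝ):ℂ) by norm_num,
    ← Complex.ofReal_cpow (by positivity), ← Complex.ofReal_mul]
  norm_num [Real.sqrt_eq_rpow, Real.rpow_natCast]

lemma myI1 (a : ℝ) (ha : 0 < a) (b : ℝ) :
    ∫ t : ℝ, (t:ℂ) * myg a b t = (Complex.I * b / (2*a)) * ∫ t : ℝ, myg a b t := by
  have ha' : (a:ℂ) ≠ 0 := by exact_mod_cast ne_of_gt ha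
  have hd : ∀ t : ℝ, HasDerivAt (myg a b) ((Complex.I * b - 2*a*t) * myg a b t) t :=
    myHasDerivAt_g a b
  have hig : Integrable (myg a b) := by simpa using my_integrable a ha b 0
  have hig1 : Integrable (fun t : ℝ => (t:ℂ) * myg a b t) := by
    simpa using my_integrable a ha b 1
  have hig' : Integrable (fun t : ℝ => (Complex.I * b - 2*a*t) * myg a b t) := by
    have h := (hig.const_mul (Complex.I * (b:ℂ))).sub (hig1.const_mul (2*(a:ℂ)))
    have e : (fun t : ℝ => (Complex.I * b - 2*a*t) * myg a b t)
        = fun t => Complex.I * (b:ℂ) * myg a b t - 2*(a:ℂ) * ((t:ℂ) * myg a b t) := by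
      funext t; ring
    rw [e]; exact h
  have hz : ∫ t : ℝ, (Complex.I * b - 2*a*t) * myg a b t = 0 :=
    my_integral_deriv_eq_zero hd hig'
      (by simpa using my_tendsto_top a ha b 0) (by simpa using my_tendsto_bot a ha b 0)
  have key : (fun t : ℝ => (t:ℂ) * myg a b t)
      = fun t : ℝ => (Complex.I * b / (2*a)) * myg a b t
        - (1/(2*a)) * ((Complex.I * b - 2*a*t) * myg a b t) := by
    funext t
    field_simp
    ring
  rw [key, integral_sub (hig.const_mul _) (hig'.const_mul _),
    integral_const_mul, integral_const_mul, hz, mul_zero, sub_zero]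

lemma myI2 (a : ℝ) (ha : 0 < a) (b : ℝ) :
    ∫ t : ℝ, (t:ℂ)^2 * myg a b t
      = ((2*(a:ℂ) - (b:ℂ)^2) / (4*(a:ℂ)^2)) * ∫ t : ℝ, myg a b t := by
  have ha' : (a:ℂ) ≠ 0 := by exact_mod_cast ne_of_gt ha
  have hd : ∀ t : ℝ, HasDerivAt (myg a b) ((Complex.I * b - 2*a*t) * myg a b t) t :=
    myHasDerivAt_g a b
  have hid : ∀ t : ℝ, HasDerivAt (fun t : ℝ => (t:ℂ)) 1 t := fun t => by
    simpa using (hasDerivAt_id t).ofReal_comp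
  have hd2 : ∀ t : ℝ, HasDerivAt (fun t : ℝ => (t:ℂ) * myg a b t)
      (1 * myg a b t + (t:ℂ) * ((Complex.I * b - 2*a*t) * myg a b t)) t :=
    fun t => (hid t).mul (hd t)
  have hig : Integrable (myg a b) := by simpa using my_integrable a ha b 0
  have hig1 : Integrable (fun t : ℝ => (t:ℂ) * myg a b t) := by
    simpa using my_integrable a ha b 1
  have hig2 : Integrable (fun t : ℝ => (t:ℂ)^2 * myg a b t) := my_integrable a ha b 2
  have e : (fun t : ℝ => 1 * myg a b t + (t:ℂ) * ((Complex.I * b - 2*a*t) * myg a b t))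
      = fun t : ℝ => (myg a b t + Complex.I * (b:ℂ) * ((t:ℂ) * myg a b t))
          - 2*(a:ℂ) * ((t:ℂ)^2 * myg a b t) := by
    funext t; ring
  have hig' : Integrable
      (fun t : ℝ => 1 * myg a b t + (t:ℂ) * ((Complex.I * b - 2*a*t) * myg a b t)) := by
    rw [e]
    exact (hig.add (hig1.const_mul _)).sub (hig2.const_mul _)
  have hz : ∫ t : ℝ, (1 * myg a b t + (t:ℂ) * ((Complex.I * b - 2*a*t) * myg a b t)) = 0 :=
    my_integral_deriv_eq_zero hd2 hig'
      (by simpa using my_tendsto_top a ha b 1) (by simpa using my_tendsto_bot a ha b 1)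
  rw [e] at hz
  have higA : Integrable (fun t : ℝ => myg a b t + Complex.I * (b:ℂ) * ((t:ℂ) * myg a b t)) :=
    hig.add (hig1.const_mul _)
  rw [integral_sub higA (hig2.const_mul _),
    integral_add hig (hig1.const_mul _), integral_const_mul, integral_const_mul,
    myI1 a ha b, sub_eq_zero] at hz
  have h2a : (2*(a:ℂ)) ≠ 0 := by simp [ha']
  field_simp at hz ⊢
  linear_combination (-1 : ℂ) * hz + (b:ℂ)^2 * (∫ t : ℝ, myg a b t) * Complex.I_sq
lemma my_pointwise (n : ℕ) (y Δ : Fin n → ℝ) (a t : ℝ) :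
    (((‖(∑ j : Fin n, (Δ j : ℂ) *
        (Complex.I * (t : ℂ) * Complex.exp (Complex.I * (t : ℂ) * (y j : ℂ)) +
          (1 - (Real.exp (y j) : ℂ)) * Complex.exp (Complex.I * (t : ℂ) * (y j : ℂ))))‖) ^ 2 *
      Real.exp (-a * t ^ 2) : ℝ) : ℂ)
    = ∑ j : Fin n, ∑ k : Fin n, ((Δ j : ℂ) * (Δ k : ℂ)) *
        ((t:ℂ)^2 * myg a (y j - y k) t
          + Complex.I * (((1 - Real.exp (y k) : ℝ) : ℂ) - ((1 - Real.exp (y j) : ℝ) : ℂ)) *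
              ((t:ℂ) * myg a (y j - y k) t)
          + ((1 - Real.exp (y j) : ℝ) : ℂ) * ((1 - Real.exp (y k) : ℝ) : ℂ)
              * myg a (y j - y k) t) := by
  set Z : ℂ := ∑ j : Fin n, (Δ j : ℂ) *
      (Complex.I * (t : ℂ) * Complex.exp (Complex.I * (t : ℂ) * (y j : ℂ)) +
        (1 - (Real.exp (y j) : ℂ)) * Complex.exp (Complex.I * (t : ℂ) * (y j : ℂ))) with hZ
  have h1 : (((‖Z‖) ^ 2 * Real.exp (-a * t ^ 2) : ℝ) : ℂ)
      = Z * (starRingEnd ℂ) Z * ((Real.exp (-a * t^2) : ℝ) : ℂ) := by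
    rw [Complex.mul_conj]
    push_cast [Complex.sq_norm]
    ring
  rw [h1, hZ, map_sum, Finset.sum_mul_sum, Finset.sum_mul]
  refine Finset.sum_congr rfl fun j _ => ?_
  rw [Finset.sum_mul]
  refine Finset.sum_congr rfl fun k _ => ?_
  simp only [map_mul, map_add, map_sub, map_one, Complex.conj_ofReal, Complex.conj_I,
    ← Complex.exp_conj]
  have hM : myg a (y j - y k) t
      = Complex.exp (Complex.I * (t:ℂ) * (y j : ℂ)) *
        Complex.exp (-Complex.I * (t:ℂ) * (y k : ℂ)) * Complex.exp (-(a:ℂ) * t^2) := by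
    rw [myg_def, ← Complex.exp_add, ← Complex.exp_add, ← Complex.exp_add]
    congr 1
    push_cast
    ring
  rw [hM]
  push_cast
  linear_combination (-((Δ j : ℂ) * (Δ k : ℂ) * (t:ℂ)^2 *
    Complex.exp (Complex.I * (t:ℂ) * (y j : ℂ)) *
    Complex.exp (-Complex.I * (t:ℂ) * (y k : ℂ)) *
    Complex.exp (-(a:ℂ) * (t:ℂ)^2))) * Complex.I_sq

lemma my_term (a : ℝ) (ha : 0 < a) (b : ℝ) (w1 w2 d1 d2 : ℝ) :
    ∫ t : ℝ, ((w1 : ℂ) * (w2 : ℂ)) * ((t:ℂ)^2 * myg a b t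
      + Complex.I * ((d2 : ℂ) - (d1 : ℂ)) * ((t:ℂ) * myg a b t)
      + (d1 : ℂ) * (d2 : ℂ) * myg a b t)
    = ((w1 * w2 * (Real.sqrt (Real.pi/a) * Real.exp (-b^2/(4*a)))
        * ((2*a - b^2)/(4*a^2) - (d2 - d1)*b/(2*a) + d1*d2) : ℝ) : ℂ) := by
  have ha' : (a:ℂ) ≠ 0 := by exact_mod_cast ne_of_gt ha
  have h2 := my_integrable a ha b 2
  have h1 : Integrable (fun t : ℝ => (t:ℂ) * myg a b t) := by simpa using my_integrable a ha b 1
  have h0 : Integrable (myg a b) := by simpa using my_integrable a ha b 0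
  have hA : Integrable (fun t : ℝ => (t:ℂ)^2 * myg a b t
      + Complex.I * ((d2 : ℂ) - (d1 : ℂ)) * ((t:ℂ) * myg a b t)) :=
    h2.add (h1.const_mul _)
  rw [integral_const_mul,
    integral_add hA (h0.const_mul _),
    integral_add h2 (h1.const_mul _), integral_const_mul, integral_const_mul,
    myI2 a ha b, myI1 a ha b, myI0 a ha b]
  push_cast
  linear_combination ((w1:ℂ) * w2 * b * ((d2:ℂ) - d1) / (2*(a:ℂ)) *
    ((Real.sqrt (Real.pi/a) : ℝ) : ℂ) * Complex.exp (-(b:ℂ)^2/(4*(a:ℂ)))) * Complex.I_sq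

lemma my_sym_sum {n : ℕ} (f g : Fin n → Fin n → ℝ)
    (h : ∀ j k, f j k + f k j = g j k + g k j) :
    ∑ j : Fin n, ∑ k : Fin n, f j k = ∑ j : Fin n, ∑ k : Fin n, g j k := by
  have h2 : ∑ j : Fin n, ∑ k : Fin n, (f j k + f k j)
      = ∑ j : Fin n, ∑ k : Fin n, (g j k + g k j) :=
    Finset.sum_congr rfl fun j _ => Finset.sum_congr rfl fun k _ => h j k
  simp only [Finset.sum_add_distrib] at h2
  have h3 : ∑ j : Fin n, ∑ k : Fin n, f k j = ∑ j : Fin n, ∑ k : Fin n, f j k :=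
    Finset.sum_comm
  have h4 : ∑ j : Fin n, ∑ k : Fin n, g k j = ∑ j : Fin n, ∑ k : Fin n, g j k :=
    Finset.sum_comm
  rw [h3, h4] at h2
  linarith


/-- Closed form of the test statistic `S_{n,a}^{(1)}` with Gaussian weight
`w_a(t) = exp(-a t²)`. -/
theorem stmt_9 (n : ℕ) (y Δ : Fin n → ℝ) (a : ℝ) (ha : 0 < a) :
    (n : ℝ) * ∫ t : ℝ,
        (‖(∑ j : Fin n, (Δ j : ℂ) *
          (Complex.I * (t : ℂ) * Complex.exp (Complex.I * (t : ℂ) * (y j : ℂ)) +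
            (1 - (Real.exp (y j) : ℂ)) * Complex.exp (Complex.I * (t : ℂ) * (y j : ℂ))))‖) ^ 2 *
        Real.exp (-a * t ^ 2) =
      (n : ℝ) * Real.sqrt (Real.pi / a) *
        ∑ j : Fin n, ∑ k : Fin n, Δ j * Δ k * Real.exp (-(y j - y k) ^ 2 / (4 * a)) *
          (-(1 / (4 * a ^ 2)) * ((y j - y k) ^ 2 - 2 * a) +
            2 * (1 - Real.exp (y j)) * (1 / (2 * a)) * (y j - y k) +
            (1 - Real.exp (y j)) * (1 - Real.exp (y k))) := by
  have haR : a ≠ 0 := ne_of_gt ha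
  suffices h : (∫ t : ℝ,
        (‖(∑ j : Fin n, (Δ j : ℂ) *
          (Complex.I * (t : ℂ) * Complex.exp (Complex.I * (t : ℂ) * (y j : ℂ)) +
            (1 - (Real.exp (y j) : ℂ)) * Complex.exp (Complex.I * (t : ℂ) * (y j : ℂ))))‖) ^ 2 *
        Real.exp (-a * t ^ 2)) =
      Real.sqrt (Real.pi / a) *
        ∑ j : Fin n, ∑ k : Fin n, Δ j * Δ k * Real.exp (-(y j - y k) ^ 2 / (4 * a)) *
          (-(1 / (4 * a ^ 2)) * ((y j - y k) ^ 2 - 2 * a) +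
            2 * (1 - Real.exp (y j)) * (1 / (2 * a)) * (y j - y k) +
            (1 - Real.exp (y j)) * (1 - Real.exp (y k))) by
    rw [h]; ring
  rw [← Complex.ofReal_inj]
  have hrc : (∫ t : ℝ,
      (((‖(∑ j : Fin n, (Δ j : ℂ) *
          (Complex.I * (t : ℂ) * Complex.exp (Complex.I * (t : ℂ) * (y j : ℂ)) +
            (1 - (Real.exp (y j) : ℂ)) * Complex.exp (Complex.I * (t : ℂ) * (y j : ℂ))))‖) ^ 2 *
        Real.exp (-a * t ^ 2) : ℝ) : ℂ))
      = (((∫ t : ℝ,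
        (‖(∑ j : Fin n, (Δ j : ℂ) *
          (Complex.I * (t : ℂ) * Complex.exp (Complex.I * (t : ℂ) * (y j : ℂ)) +
            (1 - (Real.exp (y j) : ℂ)) * Complex.exp (Complex.I * (t : ℂ) * (y j : ℂ))))‖) ^ 2 *
        Real.exp (-a * t ^ 2)) : ℝ) : ℂ) := integral_ofReal
  rw [← hrc]
  have hTint : ∀ (j k : Fin n), Integrable (fun t : ℝ =>
      ((Δ j : ℂ) * (Δ k : ℂ)) * ((t:ℂ)^2 * myg a (y j - y k) t
        + Complex.I * (((1 - Real.exp (y k) : ℝ) : ℂ) - ((1 - Real.exp (y j) : ℝ) : ℂ)) *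
            ((t:ℂ) * myg a (y j - y k) t)
        + ((1 - Real.exp (y j) : ℝ) : ℂ) * ((1 - Real.exp (y k) : ℝ) : ℂ)
            * myg a (y j - y k) t)) := by
    intro j k
    have h2 := my_integrable a ha (y j - y k) 2
    have h1 : Integrable (fun t : ℝ => (t:ℂ) * myg a (y j - y k) t) := by
      simpa using my_integrable a ha (y j - y k) 1
    have h0 : Integrable (myg a (y j - y k)) := by
      simpa using my_integrable a ha (y j - y k) 0
    have hA : Integrable (fun t : ℝ => (t:ℂ)^2 * myg a (y j - y k) t
        + Complex.I * (((1 - Real.exp (y k) : ℝ) : ℂ) - ((1 - Real.exp (y j) : ℝ) : ℂ)) *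
            ((t:ℂ) * myg a (y j - y k) t)) := h2.add (h1.const_mul _)
    have hB : Integrable (fun t : ℝ => (t:ℂ)^2 * myg a (y j - y k) t
        + Complex.I * (((1 - Real.exp (y k) : ℝ) : ℂ) - ((1 - Real.exp (y j) : ℝ) : ℂ)) *
            ((t:ℂ) * myg a (y j - y k) t)
        + ((1 - Real.exp (y j) : ℝ) : ℂ) * ((1 - Real.exp (y k) : ℝ) : ℂ)
            * myg a (y j - y k) t) := hA.add (h0.const_mul _)
    exact hB.const_mul _
  calc ∫ t : ℝ, (((‖(∑ j : Fin n, (Δ j : ℂ) *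
          (Complex.I * (t : ℂ) * Complex.exp (Complex.I * (t : ℂ) * (y j : ℂ)) +
            (1 - (Real.exp (y j) : ℂ)) * Complex.exp (Complex.I * (t : ℂ) * (y j : ℂ))))‖) ^ 2 *
        Real.exp (-a * t ^ 2) : ℝ) : ℂ)
      = ∫ t : ℝ, ∑ j : Fin n, ∑ k : Fin n, ((Δ j : ℂ) * (Δ k : ℂ)) *
          ((t:ℂ)^2 * myg a (y j - y k) t
            + Complex.I * (((1 - Real.exp (y k) : ℝ) : ℂ) - ((1 - Real.exp (y j) : ℝ) : ℂ)) *
                ((t:ℂ) * myg a (y j - y k) t)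
            + ((1 - Real.exp (y j) : ℝ) : ℂ) * ((1 - Real.exp (y k) : ℝ) : ℂ)
                * myg a (y j - y k) t) := by
        exact integral_congr_ae (Filter.Eventually.of_forall fun t => my_pointwise n y Δ a t)
    _ = ∑ j : Fin n, ∑ k : Fin n, ∫ t : ℝ, ((Δ j : ℂ) * (Δ k : ℂ)) *
          ((t:ℂ)^2 * myg a (y j - y k) t
            + Complex.I * (((1 - Real.exp (y k) : ℝ) : ℂ) - ((1 - Real.exp (y j) : ℝ) : ℂ)) *
                ((t:ℂ) * myg a (y j - y k) t)
            + ((1 - Real.exp (y j) : ℝ) : ℂ) * ((1 - Real.exp (y k) : ℝ) : ℂ)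
                * myg a (y j - y k) t) := by
        rw [integral_finset_sum _ (fun j _ => integrable_finset_sum _ (fun k _ => hTint j k))]
        exact Finset.sum_congr rfl fun j _ => integral_finset_sum _ (fun k _ => hTint j k)
    _ = ∑ j : Fin n, ∑ k : Fin n,
          ((Δ j * Δ k * (Real.sqrt (Real.pi/a) * Real.exp (-(y j - y k)^2/(4*a)))
            * ((2*a - (y j - y k)^2)/(4*a^2)
              - ((1 - Real.exp (y k)) - (1 - Real.exp (y j)))*(y j - y k)/(2*a)
              + (1 - Real.exp (y j))*(1 - Real.exp (y k))) : ℝ) : ℂ) := by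
        refine Finset.sum_congr rfl fun j _ => Finset.sum_congr rfl fun k _ => ?_
        exact my_term a ha (y j - y k) (Δ j) (Δ k) (1 - Real.exp (y j)) (1 - Real.exp (y k))
    _ = _ := by
        norm_cast
        simp_rw [Finset.mul_sum]
        refine my_sym_sum _ _ fun j k => ?_
        rw [show (y k - y j)^2 = (y j - y k)^2 by ring]
        field_simp
        ring
end

section
/- Let n ∈ ℕ, let y₁, …, yₙ ∈ ℝ and Δ₁, …, Δₙ ∈ ℝ, and let a > 0. Then n ∫_{−∞}^{∞} | Σ_{j=1}^{n} Δ_j (it e^{it y_j} + (1 − e^{y_j}) e^{it y_j}) |² e^{−a|t|} dt = n Σ_{j=1}^{n} Σ_{k=1}^{n} Δ_j Δ_k { −4a(3(y_j − y_k)² − a²)/((y_j − y_k)² + a²)³ + 8a(y_j − y_k)(1 − e^{y_j})/((y_j − y_k)² + a²)² + 2a(1 − e^{y_j})(1 − e^{y_k})/((y_j − y_k)² + a²) }, where |·| applied to the sum denotes the complex modulus and i = √(−1). -/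
open MeasureTheory Finset Set Filter Complex


-- x^n * exp(-c x) → 0
lemma tendsto_pow_mul_exp_neg_mul (n : ℕ) {c : ℝ} (hc : 0 < c) :
    Tendsto (fun x : ℝ => x ^ n * Real.exp (-c * x)) atTop (nhds 0) := by
  have h1 : Tendsto (fun x : ℝ => c * x) atTop atTop :=
    Tendsto.const_mul_atTop hc tendsto_id
  have h2 := (Real.tendsto_pow_mul_exp_neg_atTop_nhds_zero n).comp h1
  have h3 := h2.const_mul ((c ^ n)⁻¹)
  rw [mul_zero] at h3
  refine h3.congr fun x => ?_
  have hc' : (c : ℝ) ^ n ≠ 0 := pow_ne_zero _ hc.ne'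
  field_simp [Function.comp, mul_pow, neg_mul]
  simp only [Function.comp_apply, mul_pow]

-- complex exp decay tendsto
lemma tendsto_cexp_mul_pow (z : ℂ) (hz : 0 < z.re) (n : ℕ) :
    Tendsto (fun t : ℝ => Complex.exp (-(z * t)) * (t : ℂ) ^ n) atTop (nhds 0) := by
  rw [tendsto_zero_iff_norm_tendsto_zero]
  have : ∀ᶠ t : ℝ in atTop, ‖Complex.exp (-(z * t)) * (t : ℂ) ^ n‖ = t ^ n * Real.exp (-z.re * t) := by
    filter_upwards [eventually_ge_atTop (0:ℝ)] with t ht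
    rw [norm_mul, Complex.norm_exp, norm_pow, Complex.norm_real, Real.norm_eq_abs,
      _root_.abs_of_nonneg ht, mul_comm]
    congr 2
    simp [Complex.mul_re]
  exact (tendsto_pow_mul_exp_neg_mul n hz).congr' (EventuallyEq.symm this)

-- real integrability
lemma integrableOn_pow_mul_exp_neg {c : ℝ} (hc : 0 < c) (n : ℕ) :
    IntegrableOn (fun t : ℝ => t ^ n * Real.exp (-c * t)) (Ioi 0) := by
  apply integrable_of_isBigO_exp_neg (half_pos hc)
  · exact ((continuous_pow n).mul (Real.continuous_exp.comp (continuous_const.mul continuous_id))).continuousOn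
  · have h := tendsto_pow_mul_exp_neg_mul n (half_pos hc)
    refine (Asymptotics.isLittleO_of_tendsto (fun x hx => absurd hx (Real.exp_ne_zero _)) ?_).isBigO
    refine h.congr fun x => ?_
    rw [eq_div_iff (Real.exp_ne_zero _), mul_assoc, ← Real.exp_add]
    congr 2
    ring

lemma hasDerivAt_coe (t : ℝ) : HasDerivAt (fun t : ℝ => (t : ℂ)) 1 t := by
  simpa using (hasDerivAt_id t).ofReal_comp

-- complex integrability on Ioi 0
lemma integrableOn_pow_mul_cexp {z : ℂ} (hz : 0 < z.re) (n : ℕ) :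
    IntegrableOn (fun t : ℝ => (t : ℂ) ^ n * Complex.exp (-(z * t))) (Ioi 0) := by
  have hmeas : AEStronglyMeasurable (fun t : ℝ => (t : ℂ) ^ n * Complex.exp (-(z * t)))
      (volume.restrict (Ioi 0)) := by
    apply Continuous.aestronglyMeasurable
    exact ((Complex.continuous_ofReal.pow n).mul
      (Complex.continuous_exp.comp ((continuous_const.mul Complex.continuous_ofReal).neg)))
  refine Integrable.mono' (integrableOn_pow_mul_exp_neg hz n) hmeas ?_
  filter_upwards [ae_restrict_mem measurableSet_Ioi] with t ht
  rw [norm_mul, norm_pow, Complex.norm_real, Real.norm_eq_abs,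
    _root_.abs_of_nonneg (le_of_lt ht), Complex.norm_exp]
  have : (-(z * ↑t)).re = -z.re * t := by simp [Complex.mul_re]
  rw [this]

-- the three basic integrals
lemma integral_cexp0 {z : ℂ} (hz : 0 < z.re) :
    ∫ t in Ioi (0:ℝ), Complex.exp (-(z * t)) = 1 / z := by
  have hz0 : z ≠ 0 := fun h => by simp [h] at hz
  have hderiv : ∀ t ∈ Ici (0:ℝ), HasDerivAt (fun t : ℝ => -Complex.exp (-(z * t)) / z)
      (Complex.exp (-(z * t))) t := by
    intro t _
    have h1 : HasDerivAt (fun t : ℝ => -(z * (t : ℂ))) (-z) t := by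
      exact ((((hasDerivAt_id t).ofReal_comp).const_mul z).neg).congr_deriv (by simp)
    have h2 := h1.cexp
    have h3 := (h2.neg).div_const z
    refine h3.congr_deriv ?_
    field_simp
  have hint : IntegrableOn (fun t : ℝ => Complex.exp (-(z * t))) (Ioi 0) := by
    simpa using integrableOn_pow_mul_cexp hz 0
  have htend : Tendsto (fun t : ℝ => -Complex.exp (-(z * t)) / z) atTop (nhds 0) := by
    have := ((tendsto_cexp_mul_pow z hz 0).neg).div_const z
    simpa using this
  have := integral_Ioi_of_hasDerivAt_of_tendsto' hderiv hint htend
  rw [this]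
  simp [neg_div]

lemma integral_cexp1 {z : ℂ} (hz : 0 < z.re) :
    ∫ t in Ioi (0:ℝ), (t : ℂ) * Complex.exp (-(z * t)) = 1 / z ^ 2 := by
  have hz0 : z ≠ 0 := fun h => by simp [h] at hz
  have hderiv : ∀ t ∈ Ici (0:ℝ), HasDerivAt
      (fun t : ℝ => -Complex.exp (-(z * t)) * ((t : ℂ) / z + 1 / z ^ 2))
      ((t : ℂ) * Complex.exp (-(z * t))) t := by
    intro t _
    have h1 : HasDerivAt (fun t : ℝ => -(z * (t : ℂ))) (-z) t := by
      exact ((((hasDerivAt_id t).ofReal_comp).const_mul z).neg).congr_deriv (by simp)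
    have hP : HasDerivAt (fun t : ℝ => (t : ℂ) / z + 1 / z ^ 2) (1 / z) t := by
      exact ((hasDerivAt_coe t).div_const z).add_const (1 / z ^ 2)
    have h3 := (h1.cexp.neg).mul hP
    refine h3.congr_deriv (Eq.symm ?_)
    simp only [Pi.neg_apply]
    field_simp
    ring
  have hint : IntegrableOn (fun t : ℝ => (t : ℂ) * Complex.exp (-(z * t))) (Ioi 0) := by
    simpa using integrableOn_pow_mul_cexp hz 1
  have htend : Tendsto (fun t : ℝ => -Complex.exp (-(z * t)) * ((t : ℂ) / z + 1 / z ^ 2))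
      atTop (nhds 0) := by
    have h := (((tendsto_cexp_mul_pow z hz 1).div_const z).neg).sub
      (((tendsto_cexp_mul_pow z hz 0).div_const (z ^ 2)).neg.neg)
    simp only [zero_div, neg_zero, neg_neg, sub_zero, sub_neg_eq_add, zero_add, zero_sub, add_zero] at h
    refine Tendsto.congr (fun t => ?_) h
    push_cast
    ring
  have := integral_Ioi_of_hasDerivAt_of_tendsto' hderiv hint htend
  rw [this]
  push_cast
  simp

lemma integral_cexp2 {z : ℂ} (hz : 0 < z.re) :
    ∫ t in Ioi (0:ℝ), (t : ℂ) ^ 2 * Complex.exp (-(z * t)) = 2 / z ^ 3 := by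
  have hz0 : z ≠ 0 := fun h => by simp [h] at hz
  have hderiv : ∀ t ∈ Ici (0:ℝ), HasDerivAt
      (fun t : ℝ => -Complex.exp (-(z * t)) * ((t : ℂ) ^ 2 / z + 2 * t / z ^ 2 + 2 / z ^ 3))
      ((t : ℂ) ^ 2 * Complex.exp (-(z * t))) t := by
    intro t _
    have h1 : HasDerivAt (fun t : ℝ => -(z * (t : ℂ))) (-z) t := by
      exact ((((hasDerivAt_id t).ofReal_comp).const_mul z).neg).congr_deriv (by simp)
    have hP : HasDerivAt (fun t : ℝ => (t : ℂ) ^ 2 / z + 2 * t / z ^ 2 + 2 / z ^ 3)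
        (2 * t / z + 2 / z ^ 2) t := by
      have hsq : HasDerivAt (fun t : ℝ => (t : ℂ) ^ 2) (2 * t) t := by
        exact ((hasDerivAt_coe t).pow 2).congr_deriv (by norm_num)
      have := ((hsq.div_const z).add
        (((hasDerivAt_coe t).const_mul 2).div_const (z ^ 2))).add_const (2 / z ^ 3)
      refine this.congr_deriv (by ring)
    have h3 := (h1.cexp.neg).mul hP
    refine h3.congr_deriv (Eq.symm ?_)
    simp only [Pi.neg_apply]
    have hw : z * z⁻¹ = 1 := mul_inv_cancel₀ hz0
    simp only [div_eq_mul_inv, ← inv_pow]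
    linear_combination (-Complex.exp (-(z * (t:ℂ))) * ((t:ℂ)^2 + 2*t*z⁻¹ + 2*z⁻¹^2)) * hw
  have hint : IntegrableOn (fun t : ℝ => (t : ℂ) ^ 2 * Complex.exp (-(z * t))) (Ioi 0) := by
    simpa using integrableOn_pow_mul_cexp hz 2
  have htend : Tendsto
      (fun t : ℝ => -Complex.exp (-(z * t)) * ((t : ℂ) ^ 2 / z + 2 * t / z ^ 2 + 2 / z ^ 3))
      atTop (nhds 0) := by
    have h := ((((tendsto_cexp_mul_pow z hz 2).div_const z).neg).sub
      (((tendsto_cexp_mul_pow z hz 1).const_mul 2).div_const (z ^ 2))).sub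
      (((tendsto_cexp_mul_pow z hz 0).const_mul 2).div_const (z ^ 3))
    simp only [zero_div, neg_zero, mul_zero, sub_zero] at h
    refine Tendsto.congr (fun t => ?_) h
    push_cast
    ring
  have := integral_Ioi_of_hasDerivAt_of_tendsto' hderiv hint htend
  rw [this]
  push_cast
  simp

lemma integrableOn_Iic_of_neg' {f : ℝ → ℂ} (h : IntegrableOn (fun t => f (-t)) (Ioi (0:ℝ))) :
    IntegrableOn f (Iic (0:ℝ)) := by
  have A : MeasurableEmbedding (fun x : ℝ => -x) :=
    (Homeomorph.neg ℝ).isClosedEmbedding.measurableEmbedding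
  have h' : IntegrableOn (fun t => f (-t)) (Ici (0:ℝ)) :=
    Iff.mpr integrableOn_Ici_iff_integrableOn_Ioi h
  rw [IntegrableOn, ← Measure.map_neg_eq_self (volume : Measure ℝ), A.restrict_map,
    A.integrable_map_iff]
  have e : (fun x : ℝ => -x) ⁻¹' Set.Iic 0 = Set.Ici (0:ℝ) := by ext x; simp
  rw [e]
  exact h'

section W
variable {a s : ℝ}

lemma u_re (a s : ℝ) : ((a:ℂ) - Complex.I * s).re = a := by simp
lemma v_re (a s : ℝ) : ((a:ℂ) + Complex.I * s).re = a := by simp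

-- pointwise identities on the two half lines
lemma E_pos (ha : 0 < a) (s : ℝ) (n : ℕ) {t : ℝ} (ht : 0 < t) :
    (t:ℂ)^n * (Complex.exp (Complex.I * t * s) * (Real.exp (-a * |t|) : ℂ))
      = (t:ℂ)^n * Complex.exp (-(((a:ℂ) - Complex.I * s) * t)) := by
  rw [Complex.ofReal_exp, ← Complex.exp_add]
  congr 2
  rw [_root_.abs_of_pos ht]
  push_cast
  ring

lemma E_neg (ha : 0 < a) (s : ℝ) (n : ℕ) {t : ℝ} (ht : 0 < t) :
    ((-t:ℝ):ℂ)^n * (Complex.exp (Complex.I * (-t:ℝ) * s) * (Real.exp (-a * |(-t:ℝ)|) : ℂ))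
      = (-1)^n * ((t:ℂ)^n * Complex.exp (-(((a:ℂ) + Complex.I * s) * t))) := by
  rw [Complex.ofReal_exp, ← Complex.exp_add, abs_neg, _root_.abs_of_pos ht]
  push_cast
  rw [show Complex.I * -(t:ℂ) * s + -(a:ℂ) * t = -(((a:ℂ) + Complex.I * s) * t) by ring,
    neg_pow]
  ring

lemma integrable_pow_mul_E (ha : 0 < a) (s : ℝ) (n : ℕ) :
    Integrable (fun t : ℝ =>
      (t:ℂ)^n * (Complex.exp (Complex.I * t * s) * (Real.exp (-a * |t|) : ℂ))) := by
  have hu : (0:ℝ) < ((a:ℂ) - Complex.I * s).re := by rw [u_re]; exact ha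
  have hv : (0:ℝ) < ((a:ℂ) + Complex.I * s).re := by rw [v_re]; exact ha
  rw [← integrableOn_univ, ← Set.Iic_union_Ioi (a := (0:ℝ)), integrableOn_union]
  constructor
  · apply integrableOn_Iic_of_neg'
    exact IntegrableOn.congr_fun ((integrableOn_pow_mul_cexp hv n).const_mul ((-1:ℂ)^n))
      (fun t ht => (E_neg ha s n ht).symm) measurableSet_Ioi
  · exact IntegrableOn.congr_fun (integrableOn_pow_mul_cexp hu n)
      (fun t ht => (E_pos ha s n ht).symm) measurableSet_Ioi

lemma integral_pow_mul_E (ha : 0 < a) (s : ℝ) (n : ℕ)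
    (c : ℂ)
    (hc : ∀ z : ℂ, 0 < z.re → ∫ t in Ioi (0:ℝ), (t:ℂ)^n * Complex.exp (-(z * t)) = c / z ^ (n+1)) :
    ∫ t : ℝ, (t:ℂ)^n * (Complex.exp (Complex.I * t * s) * (Real.exp (-a * |t|) : ℂ))
      = c / ((a:ℂ) - Complex.I * s) ^ (n+1)
        + (-1)^n * (c / ((a:ℂ) + Complex.I * s) ^ (n+1)) := by
  have hu : (0:ℝ) < ((a:ℂ) - Complex.I * s).re := by rw [u_re]; exact ha
  have hv : (0:ℝ) < ((a:ℂ) + Complex.I * s).re := by rw [v_re]; exact ha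
  have hint := integrable_pow_mul_E ha s n
  set f : ℝ → ℂ := fun t =>
      (t:ℂ)^n * (Complex.exp (Complex.I * t * s) * (Real.exp (-a * |t|) : ℂ)) with hf
  have hsplit := intervalIntegral.integral_Iic_add_Ioi (b := (0:ℝ)) hint.integrableOn hint.integrableOn
  rw [← hsplit]
  have hIoi : ∫ t in Ioi (0:ℝ), f t = c / ((a:ℂ) - Complex.I * s) ^ (n+1) := by
    rw [setIntegral_congr_fun measurableSet_Ioi (fun t ht => E_pos ha s n ht)]
    exact hc _ hu
  have hIic : ∫ t in Iic (0:ℝ), f t = (-1)^n * (c / ((a:ℂ) + Complex.I * s) ^ (n+1)) := by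
    have h1 : ∫ t in Ioi (0:ℝ), f (-t) = ∫ t in Iic (0:ℝ), f t := by
      simpa using integral_comp_neg_Ioi (0:ℝ) f
    rw [← h1]
    rw [setIntegral_congr_fun measurableSet_Ioi (fun t ht => E_neg ha s n ht)]
    rw [MeasureTheory.integral_const_mul, hc _ hv]
  rw [hIoi, hIic]
  ring

end W

section Wval
variable {a : ℝ}

lemma huv (a s : ℝ) : ((a:ℂ) - Complex.I * s) * ((a:ℂ) + Complex.I * s)
    = (s:ℂ)^2 + (a:ℂ)^2 := by
  linear_combination (-(s:ℂ)^2) * Complex.I_sq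

lemma hd0 (ha : 0 < a) (s : ℝ) : ((s:ℂ)^2 + (a:ℂ)^2) ≠ 0 := by
  have : ((s^2 + a^2 : ℝ):ℂ) ≠ 0 := Complex.ofReal_ne_zero.mpr (by positivity)
  push_cast at this
  exact this

lemma hu0 (ha : 0 < a) (s : ℝ) : ((a:ℂ) - Complex.I * s) ≠ 0 := fun h =>
  hd0 ha s (by rw [← huv a s, h, zero_mul])

lemma hv0 (ha : 0 < a) (s : ℝ) : ((a:ℂ) + Complex.I * s) ≠ 0 := fun h =>
  hd0 ha s (by rw [← huv a s, h, mul_zero])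

lemma Wval0 (ha : 0 < a) (s : ℝ) :
    ∫ t : ℝ, (t:ℂ)^0 * (Complex.exp (Complex.I * t * s) * (Real.exp (-a * |t|) : ℂ))
      = ((2*a/(s^2+a^2) : ℝ) : ℂ) := by
  rw [integral_pow_mul_E ha s 0 1 (fun z hz => by simpa using integral_cexp0 hz)]
  push_cast
  simp only [pow_one, pow_zero, one_mul]
  rw [div_add_div _ _ (hu0 ha s) (hv0 ha s), huv a s]
  congr 1
  ring

lemma Wval1 (ha : 0 < a) (s : ℝ) :
    ∫ t : ℝ, (t:ℂ)^1 * (Complex.exp (Complex.I * t * s) * (Real.exp (-a * |t|) : ℂ))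
      = Complex.I * ((4*a*s/(s^2+a^2)^2 : ℝ) : ℂ) := by
  rw [integral_pow_mul_E ha s 1 1 (fun z hz => by simpa using integral_cexp1 hz)]
  push_cast
  simp only [pow_one, neg_one_mul, ← sub_eq_add_neg]
  rw [div_sub_div _ _ (pow_ne_zero 2 (hu0 ha s)) (pow_ne_zero 2 (hv0 ha s)),
    show ((a:ℂ) - Complex.I * s)^2 * ((a:ℂ) + Complex.I * s)^2 = ((s:ℂ)^2 + (a:ℂ)^2)^2 by
      rw [← mul_pow, huv a s],
    mul_div_assoc]
  congr 1
  ring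

lemma Wval2 (ha : 0 < a) (s : ℝ) :
    ∫ t : ℝ, (t:ℂ)^2 * (Complex.exp (Complex.I * t * s) * (Real.exp (-a * |t|) : ℂ))
      = ((4*a*(a^2-3*s^2)/(s^2+a^2)^3 : ℝ) : ℂ) := by
  rw [integral_pow_mul_E ha s 2 2 (fun z hz => by simpa using integral_cexp2 hz)]
  push_cast
  simp only [neg_one_sq, one_mul]
  rw [div_add_div _ _ (pow_ne_zero 3 (hu0 ha s)) (pow_ne_zero 3 (hv0 ha s)),
    show ((a:ℂ) - Complex.I * s)^3 * ((a:ℂ) + Complex.I * s)^3 = ((s:ℂ)^2 + (a:ℂ)^2)^3 by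
      rw [← mul_pow, huv a s]]
  congr 1
  linear_combination (12*(a:ℂ)*(s:ℂ)^2) * Complex.I_sq

end Wval

open Finset in
lemma double_sum_antisym {n : ℕ} (f : Fin n → Fin n → ℝ) (hf : ∀ j k, f j k = - f k j) :
    ∑ j : Fin n, ∑ k : Fin n, f j k = 0 := by
  have h1 : ∑ j : Fin n, ∑ k : Fin n, f j k = ∑ k : Fin n, ∑ j : Fin n, f j k :=
    Finset.sum_comm
  have h2 : ∑ k : Fin n, ∑ j : Fin n, f j k = - ∑ j : Fin n, ∑ k : Fin n, f j k := by
    rw [← Finset.sum_neg_distrib]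
    refine Finset.sum_congr rfl fun k _ => ?_
    rw [← Finset.sum_neg_distrib]
    exact Finset.sum_congr rfl fun j _ => by rw [hf j k]
  linarith [h1.trans h2]

/-- Closed form of the test statistic `S_{n,a}^{(2)}` with Laplace weight
`w_a(t) = exp(-a |t|)`. -/
theorem stmt_10 (n : ℕ) (y Δ : Fin n → ℝ) (a : ℝ) (ha : 0 < a) :
    (n : ℝ) * ∫ t : ℝ,
        (‖∑ j : Fin n, (Δ j : ℂ) *
          (Complex.I * (t : ℂ) * Complex.exp (Complex.I * (t : ℂ) * (y j : ℂ)) +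
            (1 - (Real.exp (y j) : ℂ)) * Complex.exp (Complex.I * (t : ℂ) * (y j : ℂ)))‖) ^ 2 *
        Real.exp (-a * |t|) =
      (n : ℝ) *
        ∑ j : Fin n, ∑ k : Fin n, Δ j * Δ k *
          (-4 * a * (3 * (y j - y k) ^ 2 - a ^ 2) / ((y j - y k) ^ 2 + a ^ 2) ^ 3 +
            8 * a * (y j - y k) * (1 - Real.exp (y j)) / ((y j - y k) ^ 2 + a ^ 2) ^ 2 +
            2 * a * (1 - Real.exp (y j)) * (1 - Real.exp (y k)) / ((y j - y k) ^ 2 + a ^ 2)) := by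
  congr 1
  classical
  set c : Fin n → ℝ := fun j => 1 - Real.exp (y j) with hcdef
  set F : Fin n → Fin n → ℝ → ℂ := fun j k t =>
    ((Δ j : ℂ) * (Δ k : ℂ)) *
      ((t:ℂ)^2 * (Complex.exp (Complex.I * (t:ℂ) * ((y j - y k : ℝ) : ℂ)) *
          (Real.exp (-a * |t|) : ℂ))
       + (Complex.I * ((c k : ℂ) - (c j : ℂ))) *
          ((t:ℂ)^1 * (Complex.exp (Complex.I * (t:ℂ) * ((y j - y k : ℝ) : ℂ)) *
            (Real.exp (-a * |t|) : ℂ)))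
       + ((c j : ℂ) * (c k : ℂ)) *
          ((t:ℂ)^0 * (Complex.exp (Complex.I * (t:ℂ) * ((y j - y k : ℝ) : ℂ)) *
            (Real.exp (-a * |t|) : ℂ)))) with hFdef
  have hFint : ∀ j k, Integrable (F j k) := by
    intro j k
    exact (((integrable_pow_mul_E ha (y j - y k) 2).add
      ((integrable_pow_mul_E ha (y j - y k) 1).const_mul
        (Complex.I * ((c k : ℂ) - (c j : ℂ))))).add
      ((integrable_pow_mul_E ha (y j - y k) 0).const_mul
        ((c j : ℂ) * (c k : ℂ)))).const_mul ((Δ j : ℂ) * (Δ k : ℂ))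
  have hFval : ∀ j k, ∫ t : ℝ, F j k t =
      ((Δ j * Δ k * (4*a*(a^2-3*(y j - y k)^2)/((y j - y k)^2+a^2)^3
        + (c j - c k) * (4*a*(y j - y k)/((y j - y k)^2+a^2)^2)
        + c j * c k * (2*a/((y j - y k)^2+a^2))) : ℝ) : ℂ) := by
    intro j k
    have i2 := integrable_pow_mul_E ha (y j - y k) 2
    have i1 := (integrable_pow_mul_E ha (y j - y k) 1).const_mul
      (Complex.I * ((c k : ℂ) - (c j : ℂ)))
    have i0 := (integrable_pow_mul_E ha (y j - y k) 0).const_mul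
      ((c j : ℂ) * (c k : ℂ))
    simp only [hFdef]
    have w2 := Wval2 ha (y j - y k)
    have w1 := Wval1 ha (y j - y k)
    have w0 := Wval0 ha (y j - y k)
    set E : ℝ → ℂ := fun t : ℝ =>
      Complex.exp (Complex.I * (t:ℂ) * ((y j - y k : ℝ):ℂ)) * (Real.exp (-a*|t|) : ℂ) with hEdef
    rw [MeasureTheory.integral_const_mul,
      MeasureTheory.integral_add
        (f := fun t : ℝ => (t:ℂ)^2 * E t
          + Complex.I * ((c k : ℂ) - (c j : ℂ)) * ((t:ℂ)^1 * E t))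
        (g := fun t : ℝ => ((c j : ℂ) * (c k : ℂ)) * ((t:ℂ)^0 * E t)) (i2.add i1) i0,
      MeasureTheory.integral_add
        (f := fun t : ℝ => (t:ℂ)^2 * E t)
        (g := fun t : ℝ => Complex.I * ((c k : ℂ) - (c j : ℂ)) * ((t:ℂ)^1 * E t)) i2 i1,
      MeasureTheory.integral_const_mul, MeasureTheory.integral_const_mul, w2, w1, w0]
    push_cast
    linear_combination ((Δ j : ℂ) * (Δ k : ℂ) * ((c k : ℂ) - (c j : ℂ)) *
      (4*(a:ℂ)*((y j : ℂ) - (y k : ℂ))/(((y j : ℂ) - (y k : ℂ))^2+(a:ℂ)^2)^2)) * Complex.I_sq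
  have hpoint : ∀ t : ℝ,
      (‖∑ j : Fin n, (Δ j : ℂ) *
        (Complex.I * (t : ℂ) * Complex.exp (Complex.I * (t : ℂ) * (y j : ℂ)) +
          (1 - (Real.exp (y j) : ℂ)) * Complex.exp (Complex.I * (t : ℂ) * (y j : ℂ)))‖) ^ 2 *
      Real.exp (-a * |t|) = (∑ j : Fin n, ∑ k : Fin n, F j k t).re := by
    intro t
    have hterm : ∀ j k : Fin n,
        ((Δ j : ℂ) * (Complex.I * (t : ℂ) * Complex.exp (Complex.I * (t : ℂ) * (y j : ℂ)) +
          (1 - (Real.exp (y j) : ℂ)) * Complex.exp (Complex.I * (t : ℂ) * (y j : ℂ)))) *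
        ((starRingEnd ℂ) ((Δ k : ℂ) * (Complex.I * (t : ℂ) * Complex.exp (Complex.I * (t : ℂ) * (y k : ℂ)) +
          (1 - (Real.exp (y k) : ℂ)) * Complex.exp (Complex.I * (t : ℂ) * (y k : ℂ))))) *
        ((Real.exp (-a * |t|) : ℝ) : ℂ) = F j k t := by
      intro j k
      have hck : (starRingEnd ℂ) (Complex.exp (Complex.I * (t:ℂ) * ((y k:ℝ):ℂ)))
          = Complex.exp (-(Complex.I * (t:ℂ) * ((y k:ℝ):ℂ))) := by
        rw [← Complex.exp_conj]
        congr 1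
        simp
      have hmerge : Complex.exp (Complex.I * (t:ℂ) * ((y j - y k : ℝ):ℂ))
          = Complex.exp (Complex.I * (t:ℂ) * ((y j:ℝ):ℂ)) *
            Complex.exp (-(Complex.I * (t:ℂ) * ((y k:ℝ):ℂ))) := by
        rw [← Complex.exp_add]
        congr 1
        push_cast
        ring
      simp only [hFdef, hcdef, map_mul, map_add, map_sub, map_one, Complex.conj_ofReal,
        Complex.conj_I, hck, hmerge]
      push_cast
      linear_combination (-((Δ j : ℂ) * (Δ k : ℂ) * (t:ℂ)^2 *
        Complex.exp (Complex.I * (t:ℂ) * ((y j:ℝ):ℂ)) *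
        Complex.exp (-(Complex.I * (t:ℂ) * ((y k:ℝ):ℂ))) *
        Complex.exp (-(a:ℂ) * ((|t|:ℝ):ℂ)))) * Complex.I_sq
    have hsum : ∑ j : Fin n, ∑ k : Fin n, F j k t
        = (∑ j : Fin n, (Δ j : ℂ) *
            (Complex.I * (t : ℂ) * Complex.exp (Complex.I * (t : ℂ) * (y j : ℂ)) +
              (1 - (Real.exp (y j) : ℂ)) * Complex.exp (Complex.I * (t : ℂ) * (y j : ℂ)))) *
          ((starRingEnd ℂ) (∑ k : Fin n, (Δ k : ℂ) *
            (Complex.I * (t : ℂ) * Complex.exp (Complex.I * (t : ℂ) * (y k : ℂ)) +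
              (1 - (Real.exp (y k) : ℂ)) * Complex.exp (Complex.I * (t : ℂ) * (y k : ℂ))))) *
          ((Real.exp (-a * |t|) : ℝ) : ℂ) := by
      rw [map_sum, Finset.sum_mul_sum]
      simp only [Finset.sum_mul]
      exact Finset.sum_congr rfl fun j _ => Finset.sum_congr rfl fun k _ => (hterm j k).symm
    rw [hsum, Complex.mul_conj, ← Complex.ofReal_mul, Complex.ofReal_re, Complex.sq_norm]
  simp only [hpoint]
  have hIntInner : ∀ j : Fin n, Integrable (fun t : ℝ => ∑ k : Fin n, F j k t) := fun j =>
    integrable_finset_sum _ fun k _ => hFint j k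
  have hIntSum : Integrable (fun t : ℝ => ∑ j : Fin n, ∑ k : Fin n, F j k t) :=
    integrable_finset_sum _ fun j _ => hIntInner j
  have hre := (Complex.reCLM : ℂ →L[ℝ] ℝ).integral_comp_comm hIntSum
  simp only [Complex.reCLM_apply] at hre
  rw [hre, integral_finset_sum _ (fun j _ => hIntInner j)]
  have hswap : ∀ j : Fin n, ∫ t : ℝ, ∑ k : Fin n, F j k t = ∑ k : Fin n, ∫ t : ℝ, F j k t :=
    fun j => integral_finset_sum _ fun k _ => hFint j k
  rw [Finset.sum_congr rfl fun j _ => hswap j]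
  simp only [Complex.re_sum, hFval, Complex.ofReal_re]
  rw [← sub_eq_zero, ← Finset.sum_sub_distrib]
  simp only [← Finset.sum_sub_distrib]
  apply double_sum_antisym
  intro j k
  simp only [hcdef]
  ring
end

section
/- Let w : ℝ → ℝ be a non-negative integrable weight function such that t ↦ (1 + |t|) w(t) is integrable on ℝ. Then η := ∫_{−∞}^{∞} ( ∫_{−∞}^{∞} (it + 1 − e^{y}) e^{ity} e^{y − e^{y}} dy ) w(t) dt = 0; that is, if Y follows the standard type I extreme value distribution EV(0,1), then ∫_{−∞}^{∞} E[(it + 1 − e^{Y}) e^{itY}] w(t) dt = 0. -/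
open MeasureTheory

lemma aux_exp_quad (y : ℝ) (hy : 0 ≤ y) : 1 + y + y^2/4 ≤ Real.exp y := by
  have h := Real.add_one_le_exp (y/2)
  have hsq : Real.exp y = Real.exp (y/2) * Real.exp (y/2) := by
    rw [← Real.exp_add]; ring_nf
  nlinarith [Real.exp_pos (y/2)]

lemma aux_int {a : ℝ} (ha : 1 ≤ a) :
    Integrable (fun y : ℝ => Real.exp (a * y - Real.exp y)) := by
  have hIic : IntegrableOn (fun y : ℝ => Real.exp (-|y|)) (Set.Iic (0:ℝ)) := by
    refine (integrableOn_exp_Iic 0).congr_fun (fun y hy => ?_) measurableSet_Iic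
    simp only [Set.mem_Iic] at hy
    rw [abs_of_nonpos hy, neg_neg]
  have hIoi : IntegrableOn (fun y : ℝ => Real.exp (-|y|)) (Set.Ioi (0:ℝ)) := by
    refine (exp_neg_integrableOn_Ioi 0 one_pos).congr_fun (fun y hy => ?_) measurableSet_Ioi
    simp only [Set.mem_Ioi] at hy
    rw [abs_of_pos hy]; ring_nf
  have habs : Integrable (fun y : ℝ => Real.exp (-|y|)) := by
    rw [← integrableOn_univ, ← Set.Iic_union_Ioi (a := (0:ℝ))]
    exact hIic.union hIoi
  refine Integrable.mono' ((habs.const_mul (Real.exp (a^2))))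
    (Continuous.aestronglyMeasurable (by fun_prop)) ?_
  filter_upwards with y
  rw [Real.norm_eq_abs, abs_of_pos (Real.exp_pos _), ← Real.exp_add]
  apply Real.exp_le_exp.mpr
  rcases le_or_gt y 0 with hy | hy
  · rw [abs_of_nonpos hy]
    nlinarith [Real.exp_pos y, sq_nonneg a]
  · rw [abs_of_pos hy]
    nlinarith [aux_exp_quad y hy.le, sq_nonneg (y/2 - a)]

lemma aux_tendsto_top :
    Filter.Tendsto (fun y : ℝ => Real.exp (y - Real.exp y)) Filter.atTop (nhds 0) := by
  have hg : Filter.Tendsto (fun y : ℝ => Real.exp (2 - y)) Filter.atTop (nhds 0) :=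
    Real.tendsto_exp_atBot.comp (Filter.tendsto_atBot_add_const_left _ 2 Filter.tendsto_neg_atTop_atBot)
  refine squeeze_zero (fun y => (Real.exp_pos _).le) (fun y => Real.exp_le_exp.mpr ?_) hg
  rcases le_or_gt y 0 with hy | hy
  · nlinarith [Real.exp_pos y]
  · nlinarith [aux_exp_quad y hy.le]

lemma aux_tendsto_bot :
    Filter.Tendsto (fun y : ℝ => Real.exp (y - Real.exp y)) Filter.atBot (nhds 0) := by
  refine squeeze_zero (fun y => (Real.exp_pos _).le)
    (fun y => Real.exp_le_exp.mpr ?_) Real.tendsto_exp_atBot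
  nlinarith [Real.exp_pos y]

/-- The population discrepancy `η` vanishes under the null hypothesis: if `Y ~ EV(0,1)`
(density `e^{y - e^y}`) and `w` is a non-negative weight function with
`t ↦ (1 + |t|) w(t)` integrable, then
`η = ∫ E[(it + 1 - e^Y) e^{itY}] w(t) dt = 0`. -/
theorem stmt_19 (w : ℝ → ℝ) (hw0 : ∀ t, 0 ≤ w t)
    (hw1 : Integrable w)
    (hw2 : Integrable (fun t : ℝ => (1 + |t|) * w t)) :
    ∫ t : ℝ,
        (∫ y : ℝ, ((t : ℂ) * Complex.I + 1 - (Real.exp y : ℂ)) *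
          Complex.exp ((t : ℂ) * Complex.I * (y : ℂ)) *
          (Real.exp (y - Real.exp y) : ℂ)) * (w t : ℂ) = 0 := by
  have key : ∀ t : ℝ, (∫ y : ℝ, ((t : ℂ) * Complex.I + 1 - (Real.exp y : ℂ)) *
      Complex.exp ((t : ℂ) * Complex.I * (y : ℂ)) *
      (Real.exp (y - Real.exp y) : ℂ)) = 0 := by
    intro t
    set c : ℂ := (t : ℂ) * Complex.I + 1 with hc
    have hexp : ∀ y : ℝ, Complex.exp (c * y - Real.exp y)
        = Complex.exp ((t : ℂ) * Complex.I * y) * (Real.exp (y - Real.exp y) : ℂ) := by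
      intro y
      rw [show ((Real.exp (y - Real.exp y) : ℝ) : ℂ)
          = Complex.exp ((y : ℂ) - (Real.exp y : ℂ)) from by
        rw [Complex.ofReal_exp]; push_cast; ring_nf]
      rw [← Complex.exp_add]
      congr 1
      rw [hc]
      push_cast
      ring
    have hderiv : ∀ y : ℝ, HasDerivAt (fun y : ℝ => Complex.exp (c * y - Real.exp y))
        (((t : ℂ) * Complex.I + 1 - (Real.exp y : ℂ)) *
          Complex.exp ((t : ℂ) * Complex.I * (y : ℂ)) *
          (Real.exp (y - Real.exp y) : ℂ)) y := by
      intro y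
      have h1 : HasDerivAt (fun y : ℝ => c * (y : ℂ)) c y := by
        simpa using ((hasDerivAt_id ((y : ℝ) : ℂ)).const_mul c).comp_ofReal
      have h2 : HasDerivAt (fun y : ℝ => ((Real.exp y : ℝ) : ℂ)) (Real.exp y) y :=
        (Real.hasDerivAt_exp y).ofReal_comp
      have hF := (h1.sub h2).cexp
      simp only [Pi.sub_apply] at hF
      rw [hexp y] at hF
      convert hF using 1
      rw [hc]; ring
    have hnorm : ∀ y : ℝ, ‖((t : ℂ) * Complex.I + 1 - (Real.exp y : ℂ)) *
        Complex.exp ((t : ℂ) * Complex.I * (y : ℂ)) *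
        (Real.exp (y - Real.exp y) : ℂ)‖
        ≤ (|t| + 1) * Real.exp (y - Real.exp y) + Real.exp (2 * y - Real.exp y) := by
      intro y
      have h1 : ‖Complex.exp ((t : ℂ) * Complex.I * (y : ℂ))‖ = 1 := by
        rw [Complex.norm_exp]
        simp [Complex.mul_re]
      rw [norm_mul, norm_mul, h1, mul_one]
      have h2 : ‖((Real.exp (y - Real.exp y) : ℝ) : ℂ)‖ = Real.exp (y - Real.exp y) := by
        rw [Complex.norm_real, Real.norm_eq_abs, abs_of_pos (Real.exp_pos _)]
      rw [h2]
      have h3 : ‖(t : ℂ) * Complex.I + 1 - (Real.exp y : ℂ)‖ ≤ |t| + 1 + Real.exp y := by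
        calc ‖(t : ℂ) * Complex.I + 1 - (Real.exp y : ℂ)‖
            ≤ ‖(t : ℂ) * Complex.I + 1‖ + ‖((Real.exp y : ℝ) : ℂ)‖ := norm_sub_le _ _
          _ ≤ (‖(t : ℂ) * Complex.I‖ + ‖(1 : ℂ)‖) + Real.exp y := by
              rw [Complex.norm_real, Real.norm_eq_abs, abs_of_pos (Real.exp_pos _)]
              exact add_le_add_left (norm_add_le _ _) _
          _ = |t| + 1 + Real.exp y := by simp
      have h4 : Real.exp y * Real.exp (y - Real.exp y) = Real.exp (2 * y - Real.exp y) := by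
        rw [← Real.exp_add]; ring_nf
      calc ‖(t : ℂ) * Complex.I + 1 - (Real.exp y : ℂ)‖ * Real.exp (y - Real.exp y)
          ≤ (|t| + 1 + Real.exp y) * Real.exp (y - Real.exp y) :=
            mul_le_mul_of_nonneg_right h3 (Real.exp_pos _).le
        _ = (|t| + 1) * Real.exp (y - Real.exp y) + Real.exp (2 * y - Real.exp y) := by
            rw [← h4]; ring
    have hint : Integrable (fun y : ℝ => ((t : ℂ) * Complex.I + 1 - (Real.exp y : ℂ)) *
        Complex.exp ((t : ℂ) * Complex.I * (y : ℂ)) *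
        (Real.exp (y - Real.exp y) : ℂ)) := by
      refine Integrable.mono'
        ((((aux_int le_rfl).const_mul (|t| + 1)).add
          (by simpa using aux_int (a := 2) one_le_two)))
        (Continuous.aestronglyMeasurable (by fun_prop)) ?_
      filter_upwards with y
      simpa using hnorm y
    have hFnorm : ∀ y : ℝ, ‖Complex.exp (c * y - Real.exp y)‖ = Real.exp (y - Real.exp y) := by
      intro y
      rw [Complex.norm_exp]
      congr 1
      simp [hc, Complex.mul_re, Complex.add_re, Complex.sub_re, Complex.exp_ofReal_re]
    have htop : Filter.Tendsto (fun y : ℝ => Complex.exp (c * y - Real.exp y))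
        Filter.atTop (nhds 0) := by
      rw [tendsto_zero_iff_norm_tendsto_zero]
      simpa only [hFnorm] using aux_tendsto_top
    have hbot : Filter.Tendsto (fun y : ℝ => Complex.exp (c * y - Real.exp y))
        Filter.atBot (nhds 0) := by
      rw [tendsto_zero_iff_norm_tendsto_zero]
      simpa only [hFnorm] using aux_tendsto_bot
    have := integral_of_hasDerivAt_of_tendsto hderiv hint hbot htop
    simpa using this
  simp only [key, zero_mul, integral_zero]
end
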